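/- Let {x^k}, {y^k}, {d^k} be generated by Algorithm IRPNM with ρ ∈ [0,1). Then for every k, (1 − η)·r(x^k) ≤ (2 + ‖G_k‖)·‖d^k‖ and ‖d^k‖ ≤ a₂⁻¹(1 + η)(1 + ‖G_k‖)·r(x^k)^{1−ρ}, where ‖G_k‖ denotes the spectral norm of G_k. -/

import Mathlib

open Set Metric Filter Bornology
open scoped RealInnerProductSpace Topology ENNReal

noncomputable section

/-- Euclidean space `ℝⁿ`. -/
abbrev Eu (n : ℕ) : Type := EuclideanSpace ℝ (Fin n)

/-- The convex subdifferential of an extended-real-valued function `g` at `x`. -/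
def subdiff {n : ℕ} (g : Eu n → EReal) (x : Eu n) : Set (Eu n) :=
  {v | ∀ z : Eu n, g x + ((⟪v, z - x⟫ : ℝ) : EReal) ≤ g z}

/-- `g` is proper: not identically `+∞` and nowhere `-∞`. -/
def ProperFun {n : ℕ} (g : Eu n → EReal) : Prop :=
  (∃ x, g x ≠ ⊤) ∧ ∀ x, g x ≠ ⊥

/-- `g` is convex. -/
def ConvexFun {n : ℕ} (g : Eu n → EReal) : Prop :=
  ∀ x z : Eu n, ∀ a c : ℝ, 0 ≤ a → 0 ≤ c → a + c = 1 →
    g (a • x + c • z) ≤ (a : EReal) * g x + (c : EReal) * g z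

/-- The effective domain of `g`. -/
def domg {n : ℕ} (g : Eu n → EReal) : Set (Eu n) := {x | g x ≠ ⊤}

/-- `prox` is the proximal mapping of `g` (with parameter 1). -/
def IsProxOf {n : ℕ} (g : Eu n → EReal) (prox : Eu n → Eu n) : Prop :=
  ∀ z u : Eu n,
    ((‖prox z - z‖ ^ 2 / 2 : ℝ) : EReal) + g (prox z)
      ≤ ((‖u - z‖ ^ 2 / 2 : ℝ) : EReal) + g u

/-- `f(x) = ψ(Ax - b)`. -/
def fval {n m : ℕ} (ψ : Eu m → ℝ) (A : Eu n →L[ℝ] Eu m) (b : Eu m) (x : Eu n) : ℝ :=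
  ψ (A x - b)

/-- `∇f(x) = Aᵀ ∇ψ(Ax - b)`. -/
def gradfval {n m : ℕ} (gradψ : Eu m → Eu m) (A : Eu n →L[ℝ] Eu m) (b : Eu m)
    (x : Eu n) : Eu n :=
  ContinuousLinearMap.adjoint A (gradψ (A x - b))

/-- `∇²f(x) = Aᵀ ∇²ψ(Ax - b) A`. -/
def hessfval {n m : ℕ} (hessψ : Eu m → (Eu m →L[ℝ] Eu m)) (A : Eu n →L[ℝ] Eu m) (b : Eu m)
    (x : Eu n) : Eu n →L[ℝ] Eu n :=
  (ContinuousLinearMap.adjoint A).comp ((hessψ (A x - b)).comp A)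

/-- `F = f + g`, extended-real-valued. -/
def Fval {n m : ℕ} (ψ : Eu m → ℝ) (A : Eu n →L[ℝ] Eu m) (b : Eu m) (g : Eu n → EReal)
    (x : Eu n) : EReal :=
  ((fval ψ A b x : ℝ) : EReal) + g x

/-- The residual mapping `R(x) = x - prox_g(x - ∇f(x))`. -/
def Rres {n m : ℕ} (gradψ : Eu m → Eu m) (A : Eu n →L[ℝ] Eu m) (b : Eu m)
    (prox : Eu n → Eu n) (x : Eu n) : Eu n :=
  x - prox (x - gradfval gradψ A b x)

/-- The KKT residual `r(x) = ‖R(x)‖`. -/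
def rres {n m : ℕ} (gradψ : Eu m → Eu m) (A : Eu n →L[ℝ] Eu m) (b : Eu m)
    (prox : Eu n → Eu n) (x : Eu n) : ℝ :=
  ‖Rres gradψ A b prox x‖

/-- The subdifferential `∂F(x) = ∇f(x) + ∂g(x)`. -/
def subF {n m : ℕ} (gradψ : Eu m → Eu m) (A : Eu n →L[ℝ] Eu m) (b : Eu m)
    (g : Eu n → EReal) (x : Eu n) : Set (Eu n) :=
  {u | u - gradfval gradψ A b x ∈ subdiff g x}

/-- The stationary point set `S* = {x : 0 ∈ ∂F(x)}`. -/
def SstarSet {n m : ℕ} (gradψ : Eu m → Eu m) (A : Eu n →L[ℝ] Eu m) (b : Eu m)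
    (g : Eu n → EReal) : Set (Eu n) :=
  {x | (0 : Eu n) ∈ subF gradψ A b g x}

/-- Smallest eigenvalue of a (self-adjoint) operator, via the Rayleigh quotient. -/
def lamMin {m : ℕ} (T : Eu m →L[ℝ] Eu m) : ℝ :=
  sInf ((fun v => ⟪T v, v⟫) '' Metric.sphere (0 : Eu m) 1)

/-- The strong stationary point set `X* = {x ∈ S* : ∇²ψ(Ax-b) ⪰ 0}`. -/
def XstarSet {n m : ℕ} (gradψ : Eu m → Eu m) (hessψ : Eu m → (Eu m →L[ℝ] Eu m))
    (A : Eu n →L[ℝ] Eu m) (b : Eu m) (g : Eu n → EReal) : Set (Eu n) :=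
  {x | x ∈ SstarSet gradψ A b g ∧ ∀ v : Eu m, 0 ≤ ⟪hessψ (A x - b) v, v⟫}

/-- `ψ` is twice continuously differentiable on `A(O) - b`, with gradient `gradψ`
and Hessian `hessψ` there. -/
def TwiceDiffOn {n m : ℕ} (ψ : Eu m → ℝ) (gradψ : Eu m → Eu m)
    (hessψ : Eu m → (Eu m →L[ℝ] Eu m)) (A : Eu n →L[ℝ] Eu m) (b : Eu m)
    (O : Set (Eu n)) : Prop :=
  (∀ u ∈ (fun z : Eu n => A z - b) '' O, HasGradientAt ψ (gradψ u) u) ∧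
  (∀ u ∈ (fun z : Eu n => A z - b) '' O, HasFDerivAt gradψ (hessψ u) u) ∧
  ContinuousOn gradψ ((fun z : Eu n => A z - b) '' O) ∧
  ContinuousOn hessψ ((fun z : Eu n => A z - b) '' O)

/-- Assumption 1.1 of the paper, together with the data of the proximal map of `g`. -/
def BasicAssumptions {n m : ℕ} (ψ : Eu m → ℝ) (gradψ : Eu m → Eu m)
    (hessψ : Eu m → (Eu m →L[ℝ] Eu m)) (A : Eu n →L[ℝ] Eu m) (b : Eu m)
    (g : Eu n → EReal) (prox : Eu n → Eu n) (O : Set (Eu n)) : Prop :=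
  IsOpen O ∧ domg g ⊆ O ∧ TwiceDiffOn ψ gradψ hessψ A b O ∧
  ProperFun g ∧ ConvexFun g ∧ LowerSemicontinuous g ∧ ContinuousOn g (domg g) ∧
  IsProxOf g prox ∧
  (∃ c : ℝ, ∀ x, (c : EReal) ≤ Fval ψ A b g x) ∧
  (∀ c : ℝ, Bornology.IsBounded {x | Fval ψ A b g x ≤ (c : EReal)})

/-- The regularized Hessian `G_k = ∇²f(x_k) + a₁ [−λ_min(∇²ψ(Ax_k−b))]₊ AᵀA + μ I`. -/
def GkOf {n m : ℕ} (hessψ : Eu m → (Eu m →L[ℝ] Eu m)) (A : Eu n →L[ℝ] Eu m) (b : Eu m)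
    (a₁ μ : ℝ) (xk : Eu n) : Eu n →L[ℝ] Eu n :=
  hessfval hessψ A b xk
    + (a₁ * max 0 (-(lamMin (hessψ (A xk - b))))) • ((ContinuousLinearMap.adjoint A).comp A)
    + μ • (ContinuousLinearMap.id ℝ (Eu n))

/-- `R_k(y) = y - prox_g(y - ∇f(x_k) - G(y - x_k))`. -/
def RkRes {n m : ℕ} (gradψ : Eu m → Eu m) (A : Eu n →L[ℝ] Eu m) (b : Eu m)
    (prox : Eu n → Eu n) (G : Eu n →L[ℝ] Eu n) (xk yy : Eu n) : Eu n :=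
  yy - prox (yy - gradfval gradψ A b xk - G (yy - xk))

/-- `r_k(y) = ‖R_k(y)‖`. -/
def rkRes {n m : ℕ} (gradψ : Eu m → Eu m) (A : Eu n →L[ℝ] Eu m) (b : Eu m)
    (prox : Eu n → Eu n) (G : Eu n →L[ℝ] Eu n) (xk yy : Eu n) : ℝ :=
  ‖RkRes gradψ A b prox G xk yy‖

/-- The subproblem objective
`Θ_k(x) = f(x_k) + ⟨∇f(x_k), x - x_k⟩ + (1/2)⟨x - x_k, G (x - x_k)⟩ + g(x)`. -/
def ThetaK {n m : ℕ} (ψ : Eu m → ℝ) (gradψ : Eu m → Eu m) (A : Eu n →L[ℝ] Eu m) (b : Eu m)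
    (g : Eu n → EReal) (G : Eu n →L[ℝ] Eu n) (xk x : Eu n) : EReal :=
  ((fval ψ A b xk + ⟪gradfval gradψ A b xk, x - xk⟫
      + ⟪x - xk, G (x - xk)⟫ / 2 : ℝ) : EReal) + g x

/-- The Armijo descent condition `F(x_k) - F(x_k + βᵐ d) ≥ σ βᵐ μ ‖d‖²`. -/
def ArmijoOK {n m : ℕ} (ψ : Eu m → ℝ) (A : Eu n →L[ℝ] Eu m) (b : Eu m) (g : Eu n → EReal)
    (σ β μ : ℝ) (xk dk : Eu n) (M : ℕ) : Prop :=
  Fval ψ A b g (xk + β ^ M • dk) + ((σ * β ^ M * μ * ‖dk‖ ^ 2 : ℝ) : EReal)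
    ≤ Fval ψ A b g xk

/-- `hessψ` is strictly continuous at `u0` relative to `S` with modulus `Lψ`. -/
def StrictContAt {m : ℕ} (hessψ : Eu m → (Eu m →L[ℝ] Eu m)) (S : Set (Eu m)) (u0 : Eu m)
    (Lψ : ℝ) : Prop :=
  0 ≤ Lψ ∧ ∃ δ₀ > (0 : ℝ), ∀ z ∈ Metric.closedBall u0 δ₀ ∩ S,
    ∀ z' ∈ Metric.closedBall u0 δ₀ ∩ S, ‖hessψ z - hessψ z'‖ ≤ Lψ * ‖z - z'‖

/-- The KL property of `F = f + g` at `xbar` (general desingularizing function `φ`). -/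
def KLatGen {n m : ℕ} (ψ : Eu m → ℝ) (gradψ : Eu m → Eu m) (A : Eu n →L[ℝ] Eu m) (b : Eu m)
    (g : Eu n → EReal) (xbar : Eu n) : Prop :=
  ∃ δ > (0 : ℝ), ∃ ϖ : EReal, 0 < ϖ ∧ ∃ φ dφ : ℝ → ℝ,
    φ 0 = 0 ∧
    ContinuousOn φ {t : ℝ | 0 ≤ t ∧ (t : EReal) < ϖ} ∧
    ConcaveOn ℝ {t : ℝ | 0 ≤ t ∧ (t : EReal) < ϖ} φ ∧
    (∀ t : ℝ, 0 < t → (t : EReal) < ϖ → HasDerivAt φ (dφ t) t ∧ 0 < dφ t) ∧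
    ∀ z ∈ Metric.closedBall xbar δ,
      Fval ψ A b g xbar < Fval ψ A b g z → Fval ψ A b g z < Fval ψ A b g xbar + ϖ →
        ∀ v ∈ subF gradψ A b g z,
          1 ≤ dφ ((Fval ψ A b g z - Fval ψ A b g xbar).toReal) * ‖v‖

/-- The KL property of `F = f + g` with exponent `θ` at `xbar`. -/
def KLexpAt {n m : ℕ} (ψ : Eu m → ℝ) (gradψ : Eu m → Eu m) (A : Eu n →L[ℝ] Eu m) (b : Eu m)
    (g : Eu n → EReal) (θ : ℝ) (xbar : Eu n) : Prop :=
  ∃ δ > (0 : ℝ), ∃ ϖ : EReal, 0 < ϖ ∧ ∃ c > (0 : ℝ),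
    ∀ z ∈ Metric.closedBall xbar δ,
      Fval ψ A b g xbar < Fval ψ A b g z → Fval ψ A b g z < Fval ψ A b g xbar + ϖ →
        ∀ v ∈ subF gradψ A b g z,
          1 ≤ c * (1 - θ) * ((Fval ψ A b g z - Fval ψ A b g xbar).toReal) ^ (-θ) * ‖v‖

end

noncomputable section

/-- The data and assumptions of Algorithm IRPNM (inexact regularized proximal Newton method),
producing an infinite sequence of iterates `x k` with `r(x k) > 0` for all `k`. -/
structure IRPNM (n m : ℕ) where
  ψ : Eu m → ℝ
  gradψ : Eu m → Eu m
  hessψ : Eu m → (Eu m →L[ℝ] Eu m)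
  A : Eu n →L[ℝ] Eu m
  b : Eu m
  g : Eu n → EReal
  prox : Eu n → Eu n
  O : Set (Eu n)
  a₁ : ℝ
  a₂ : ℝ
  ρ : ℝ
  τ : ℝ
  η : ℝ
  β : ℝ
  σ : ℝ
  x : ℕ → Eu n
  y : ℕ → Eu n
  d : ℕ → Eu n
  mik : ℕ → ℕ
  α : ℕ → ℝ
  basic : BasicAssumptions ψ gradψ hessψ A b g prox O
  ha₁ : 1 ≤ a₁
  ha₂ : 0 < a₂
  hρ : 0 ≤ ρ ∧ ρ < 1
  hτ : ρ ≤ τ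
  hη : 0 < η ∧ η < 1
  hβ : 0 < β ∧ β < 1
  hσ : 0 < σ ∧ σ < 1/2
  hxdom : ∀ k, x k ∈ domg g
  hydom : ∀ k, y k ∈ domg g
  hrpos : ∀ k, 0 < rres gradψ A b prox (x k)
  /-- the inexactness criterion (3.1), used when `ρ ∈ (0,1)` -/
  hinexact_pos : 0 < ρ → ∀ k,
    rkRes gradψ A b prox
        (GkOf hessψ A b a₁ (a₂ * (rres gradψ A b prox (x k)) ^ ρ) (x k)) (x k) (y k)
      ≤ η * min (rres gradψ A b prox (x k)) ((rres gradψ A b prox (x k)) ^ (1 + τ)) ∧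
    ThetaK ψ gradψ A b g (GkOf hessψ A b a₁ (a₂ * (rres gradψ A b prox (x k)) ^ ρ) (x k))
        (x k) (y k)
      ≤ ThetaK ψ gradψ A b g (GkOf hessψ A b a₁ (a₂ * (rres gradψ A b prox (x k)) ^ ρ) (x k))
        (x k) (x k)
  /-- the inexactness criterion (3.2), used when `ρ = 0`:
  `dist(0, ∂Θ_k(y k)) ≤ η r(x k)` and `Θ_k(y k) ≤ Θ_k(x k)` -/
  hinexact_zero : ρ = 0 → ∀ k,
    (∃ v ∈ subdiff g (y k),
        ‖gradfval gradψ A b (x k)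
            + (GkOf hessψ A b a₁ (a₂ * (rres gradψ A b prox (x k)) ^ ρ) (x k)) (y k - x k)
            + v‖
          ≤ η * rres gradψ A b prox (x k)) ∧
    ThetaK ψ gradψ A b g (GkOf hessψ A b a₁ (a₂ * (rres gradψ A b prox (x k)) ^ ρ) (x k))
        (x k) (y k)
      ≤ ThetaK ψ gradψ A b g (GkOf hessψ A b a₁ (a₂ * (rres gradψ A b prox (x k)) ^ ρ) (x k))
        (x k) (x k)
  hd : ∀ k, d k = y k - x k
  /-- `mk k` is the smallest nonnegative integer `M` satisfying the Armijo condition -/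
  hls : ∀ k,
    ArmijoOK ψ A b g σ β (a₂ * (rres gradψ A b prox (x k)) ^ ρ) (x k) (d k) (mik k) ∧
    ∀ M < mik k, ¬ ArmijoOK ψ A b g σ β (a₂ * (rres gradψ A b prox (x k)) ^ ρ) (x k) (d k) M
  hα : ∀ k, α k = β ^ (mik k)
  /-- the update rule (3.6) -/
  hupdate : ∀ k,
    (Fval ψ A b g (y k) < Fval ψ A b g (x k + α k • d k) ∧ x (k+1) = y k) ∨
    (¬ Fval ψ A b g (y k) < Fval ψ A b g (x k + α k • d k) ∧ x (k+1) = x k + α k • d k)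

end

noncomputable section

/-!
Write `R(x) = x - prox (x - ∇f(x))` and `R_k(y) = y - prox (y - ∇f(x) - G (y - x))`, with
`‖R_k(y)‖ ≤ η ‖R(x)‖` (for `ρ = 0` because `‖R_k(y)‖` is at most the norm of any element of
`∂Θ_k(y)`). Nonexpansiveness of `prox` gives `‖R(x) - R_k(y)‖ ≤ (2 + ‖G‖) ‖y - x‖`, hence the
first inequality. Monotonicity of `∂g` at the two prox points gives
`⟪G d, d⟫ ≤ (1 + ‖G‖) ‖R(x) - R_k(y)‖ ‖d‖`, and `G ⪰ μ I` with `μ = a₂ r^ρ` turns this into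
the second.
-/

lemma le_of_forall_le_add_mul {a b c : ℝ} (h : ∀ t : ℝ, 0 < t → t ≤ 1 → a ≤ b + t * c) :
    a ≤ b := by
  have hlim : Tendsto (fun t : ℝ => b + t * c) (𝓝[>] 0) (𝓝 b) :=
    ((by fun_prop : Continuous fun t : ℝ => b + t * c).tendsto' 0 b (by simp)).mono_left
      nhdsWithin_le_nhds
  refine ge_of_tendsto hlim ?_
  filter_upwards [Ioc_mem_nhdsGT (zero_lt_one' ℝ)] with t ht using h t ht.1 ht.2

lemma norm_le_of_inner_sub_nonneg {E : Type*} [NormedAddCommGroup E] [InnerProductSpace ℝ E]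
    {a b : E} (h : 0 ≤ ⟪a - b, b⟫) : ‖b‖ ≤ ‖a‖ := by
  rw [inner_sub_left, real_inner_self_eq_norm_sq] at h
  have hcs := real_inner_le_norm a b
  rcases (norm_nonneg b).eq_or_lt with h0 | h0
  · rw [← h0]; exact norm_nonneg _
  · nlinarith

lemma le_div_of_mul_sq_le_mul {μ K d : ℝ} (hμ : 0 < μ) (hK : 0 ≤ K) (hd : 0 ≤ d)
    (h : μ * d ^ 2 ≤ K * d) : d ≤ K / μ := by
  rw [le_div_iff₀ hμ]
  rcases hd.eq_or_lt with rfl | hd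
  · simpa using hK
  · nlinarith

section Prox

variable {n : ℕ} {g : Eu n → EReal} {prox : Eu n → Eu n}

lemma ProperFun.coe_toReal (hp : ProperFun g) {x : Eu n} (hx : g x ≠ ⊤) :
    ((g x).toReal : EReal) = g x :=
  EReal.coe_toReal hx (hp.2 x)

lemma IsProxOf.ne_top (hprox : IsProxOf g prox) (hp : ProperFun g) (z : Eu n) :
    g (prox z) ≠ ⊤ := by
  obtain ⟨u, hu⟩ := hp.1
  intro htop
  have h := hprox z u
  rw [htop, EReal.add_top_of_ne_bot (EReal.coe_ne_bot _), top_le_iff] at h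
  exact EReal.add_ne_top (EReal.coe_ne_top _) hu h

lemma IsProxOf.sub_mem_subdiff (hprox : IsProxOf g prox) (hp : ProperFun g) (hc : ConvexFun g)
    (z : Eu n) : z - prox z ∈ subdiff g (prox z) := by
  intro u
  by_cases hu : g u = ⊤
  · rw [hu]; exact le_top
  obtain ⟨p, hpz⟩ : ∃ p, prox z = p := ⟨_, rfl⟩
  obtain ⟨gp, hgp⟩ : ∃ a : ℝ, g p = a :=
    ⟨_, (hp.coe_toReal (hpz ▸ hprox.ne_top hp z)).symm⟩
  obtain ⟨gu, hgu⟩ : ∃ a : ℝ, g u = a := ⟨_, (hp.coe_toReal hu).symm⟩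
  rw [hpz, hgp, hgu, ← EReal.coe_add, EReal.coe_le_coe_iff]
  -- Compare `p` with the competitor `p + t (u - p)` in the prox problem and let `t → 0`.
  suffices h : ∀ t : ℝ, 0 < t → t ≤ 1 →
      gp ≤ (gu - ⟪z - p, u - p⟫) + t * (‖u - p‖ ^ 2 / 2) by
    linarith [le_of_forall_le_add_mul h]
  intro t ht ht1
  have hconv := hc p u (1 - t) t (by linarith) ht.le (by ring)
  rw [hgp, hgu, ← EReal.coe_mul, ← EReal.coe_mul, ← EReal.coe_add,
    show (1 - t) • p + t • u = p + t • (u - p) by module] at hconv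
  have hmin := hprox z (p + t • (u - p))
  rw [hpz, hgp] at hmin
  replace hmin := hmin.trans (add_le_add_right hconv _)
  rw [← EReal.coe_add, ← EReal.coe_add, EReal.coe_le_coe_iff,
    show p + t • (u - p) - z = (p - z) + t • (u - p) by abel, norm_add_sq_real,
    real_inner_smul_right, norm_smul, mul_pow, Real.norm_eq_abs, abs_of_pos ht] at hmin
  have hzp : ⟪z - p, u - p⟫ = -⟪p - z, u - p⟫ := by rw [← inner_neg_left, neg_sub]
  rw [hzp]
  have ht_mul : t * gp ≤ t * (gu + ⟪p - z, u - p⟫ + t * (‖u - p‖ ^ 2 / 2)) := by linarith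
  linarith [le_of_mul_le_mul_left ht_mul ht]

lemma subdiff_monotone (hp : ProperFun g) {p q v w : Eu n} (hv : v ∈ subdiff g p)
    (hw : w ∈ subdiff g q) (hgp : g p ≠ ⊤) (hgq : g q ≠ ⊤) : 0 ≤ ⟪v - w, p - q⟫ := by
  have h₁ := hv q
  have h₂ := hw p
  rw [← hp.coe_toReal hgp, ← hp.coe_toReal hgq, ← EReal.coe_add, EReal.coe_le_coe_iff]
    at h₁ h₂
  have hqp : ⟪v, q - p⟫ = -⟪v, p - q⟫ := by rw [← inner_neg_right, neg_sub]
  rw [inner_sub_left]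
  linarith

lemma IsProxOf.inner_nonneg (hprox : IsProxOf g prox) (hp : ProperFun g) (hc : ConvexFun g)
    (z₁ z₂ : Eu n) : 0 ≤ ⟪(z₁ - prox z₁) - (z₂ - prox z₂), prox z₁ - prox z₂⟫ :=
  subdiff_monotone hp (hprox.sub_mem_subdiff hp hc z₁) (hprox.sub_mem_subdiff hp hc z₂)
    (hprox.ne_top hp z₁) (hprox.ne_top hp z₂)

lemma IsProxOf.norm_prox_sub_le (hprox : IsProxOf g prox) (hp : ProperFun g) (hc : ConvexFun g)
    (z₁ z₂ : Eu n) : ‖prox z₁ - prox z₂‖ ≤ ‖z₁ - z₂‖ := by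
  refine norm_le_of_inner_sub_nonneg ?_
  convert hprox.inner_nonneg hp hc z₁ z₂ using 2
  abel

lemma IsProxOf.norm_sub_prox_le (hprox : IsProxOf g prox) (hp : ProperFun g)
    (hc : ConvexFun g) {y v : Eu n} (hv : v ∈ subdiff g y) (hy : g y ≠ ⊤) (w : Eu n) :
    ‖y - prox (y - w)‖ ≤ ‖w + v‖ := by
  refine norm_le_of_inner_sub_nonneg ?_
  convert subdiff_monotone hp hv (hprox.sub_mem_subdiff hp hc (y - w)) hy
    (hprox.ne_top hp _) using 2
  abel

lemma IsProxOf.norm_residual_le (hprox : IsProxOf g prox) (hp : ProperFun g)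
    (hc : ConvexFun g) (G : Eu n →L[ℝ] Eu n) (x y u : Eu n) :
    ‖x - prox (x - u)‖ ≤ ‖y - prox (y - u - G (y - x))‖ + (2 + ‖G‖) * ‖y - x‖ := by
  have hprox_le : ‖prox (y - u - G (y - x)) - prox (x - u)‖ ≤ (1 + ‖G‖) * ‖y - x‖ :=
    calc _ ≤ ‖(y - u - G (y - x)) - (x - u)‖ := hprox.norm_prox_sub_le hp hc _ _
      _ = ‖(y - x) - G (y - x)‖ := by congr 1; abel
      _ ≤ ‖y - x‖ + ‖G‖ * ‖y - x‖ :=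
        (_root_.norm_sub_le _ _).trans (by gcongr; exact G.le_opNorm _)
      _ = (1 + ‖G‖) * ‖y - x‖ := by ring
  calc ‖x - prox (x - u)‖
      = ‖(y - prox (y - u - G (y - x))) + (x - y)
          + (prox (y - u - G (y - x)) - prox (x - u))‖ := by congr 1; abel
    _ ≤ ‖y - prox (y - u - G (y - x))‖ + ‖x - y‖
          + ‖prox (y - u - G (y - x)) - prox (x - u)‖ := norm_add₃_le
    _ ≤ ‖y - prox (y - u - G (y - x))‖ + ‖y - x‖ + (1 + ‖G‖) * ‖y - x‖ := by
      rw [norm_sub_rev x y]; gcongr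
    _ = _ := by ring

lemma IsProxOf.inner_le (hprox : IsProxOf g prox) (hp : ProperFun g) (hc : ConvexFun g)
    (G : Eu n →L[ℝ] Eu n) (x y u : Eu n) :
    ⟪G (y - x), y - x⟫ ≤ (1 + ‖G‖)
      * (‖x - prox (x - u)‖ + ‖y - prox (y - u - G (y - x))‖) * ‖y - x‖ := by
  set d := y - x
  set w := (x - prox (x - u)) - (y - prox (y - u - G d))
  have hmono := hprox.inner_nonneg hp hc (x - u) (y - u - G d)
  rw [show (x - u - prox (x - u)) - (y - u - G d - prox (y - u - G d)) = w + G d by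
      simp only [w, d]; abel,
    show prox (x - u) - prox (y - u - G d) = -(d + w) by simp only [w, d]; abel,
    inner_neg_right, inner_add_left, inner_add_right, inner_add_right,
    real_inner_self_eq_norm_sq] at hmono
  have h₁ : -⟪w, d⟫ ≤ ‖w‖ * ‖d‖ := (neg_le_abs _).trans (abs_real_inner_le_norm w d)
  have h₂ : -⟪G d, w⟫ ≤ ‖G‖ * ‖d‖ * ‖w‖ :=
    ((neg_le_abs _).trans (abs_real_inner_le_norm (G d) w)).trans
      (by gcongr; exact G.le_opNorm d)
  have hw : ‖w‖ ≤ ‖x - prox (x - u)‖ + ‖y - prox (y - u - G d)‖ := _root_.norm_sub_le _ _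
  calc ⟪G d, d⟫ ≤ (1 + ‖G‖) * ‖w‖ * ‖d‖ := by nlinarith [sq_nonneg ‖w‖]
    _ ≤ _ := by gcongr

end Prox

lemma lamMin_mul_norm_sq_le {m : ℕ} (T : Eu m →L[ℝ] Eu m) (w : Eu m) :
    lamMin T * ‖w‖ ^ 2 ≤ ⟪T w, w⟫ := by
  rcases eq_or_ne w 0 with rfl | hw
  · simp
  have hbdd : BddBelow ((fun v => ⟪T v, v⟫) '' sphere (0 : Eu m) 1) :=
    ((isCompact_sphere (0 : Eu m) 1).image (T.continuous.inner continuous_id)).bddBelow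
  have hnw : 0 < ‖w‖ := norm_pos_iff.mpr hw
  have hmem : ‖w‖⁻¹ • w ∈ sphere (0 : Eu m) 1 := by
    simp [norm_smul, hnw.ne']
  have hle : lamMin T ≤ ⟪T (‖w‖⁻¹ • w), ‖w‖⁻¹ • w⟫ := csInf_le hbdd ⟨_, hmem, rfl⟩
  rw [map_smul, real_inner_smul_left, real_inner_smul_right, ← mul_assoc, ← sq, inv_pow,
    ← div_eq_inv_mul, le_div_iff₀ (by positivity)] at hle
  exact hle

lemma mul_norm_sq_le_inner_GkOf {n m : ℕ} (hessψ : Eu m → (Eu m →L[ℝ] Eu m))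
    (A : Eu n →L[ℝ] Eu m) (b : Eu m) {a₁ : ℝ} (ha₁ : 1 ≤ a₁) (μ : ℝ) (xk v : Eu n) :
    μ * ‖v‖ ^ 2 ≤ ⟪GkOf hessψ A b a₁ μ xk v, v⟫ := by
  set T := hessψ (A xk - b) with hT
  have hG : ⟪GkOf hessψ A b a₁ μ xk v, v⟫
      = ⟪T (A v), A v⟫ + a₁ * max 0 (-lamMin T) * ‖A v‖ ^ 2 + μ * ‖v‖ ^ 2 := by
    simp only [GkOf, hessfval, ← hT, add_apply, ContinuousLinearMap.comp_apply, smul_apply,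
      ContinuousLinearMap.id_apply, inner_add_left, real_inner_smul_left,
      ContinuousLinearMap.adjoint_inner_left, real_inner_self_eq_norm_sq]
  -- The shift `a₁ [-λ_min]₊ ≥ -λ_min` makes the curvature term nonnegative.
  have hshift : 0 ≤ lamMin T + a₁ * max 0 (-lamMin T) := by
    nlinarith [le_max_left 0 (-lamMin T), le_max_right 0 (-lamMin T)]
  nlinarith [lamMin_mul_norm_sq_le T (A v), mul_nonneg hshift (sq_nonneg ‖A v‖)]

namespace IRPNM

variable {n m : ℕ} (P : IRPNM n m) (k : ℕ)

def r : ℝ := rres P.gradψ P.A P.b P.prox (P.x k)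

def μ : ℝ := P.a₂ * P.r k ^ P.ρ

def G : Eu n →L[ℝ] Eu n := GkOf P.hessψ P.A P.b P.a₁ (P.μ k) (P.x k)

def rk : ℝ := rkRes P.gradψ P.A P.b P.prox (P.G k) (P.x k) (P.y k)

lemma properFun : ProperFun P.g := P.basic.2.2.2.1

lemma convexFun : ConvexFun P.g := P.basic.2.2.2.2.1

lemma isProxOf : IsProxOf P.g P.prox := P.basic.2.2.2.2.2.2.2.1

lemma r_pos : 0 < P.r k := P.hrpos k

lemma μ_pos : 0 < P.μ k := mul_pos P.ha₂ (Real.rpow_pos_of_pos (P.r_pos k) _)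

lemma rk_le : P.rk k ≤ P.η * P.r k := by
  rcases P.hρ.1.eq_or_lt with hρ | hρ
  · obtain ⟨⟨v, hv, hnorm⟩, -⟩ := P.hinexact_zero hρ.symm k
    refine le_trans ?_ hnorm
    rw [rk, rkRes, RkRes, sub_sub]
    exact P.isProxOf.norm_sub_prox_le P.properFun P.convexFun hv (P.hydom k) _
  · exact (P.hinexact_pos hρ k).1.trans
      (mul_le_mul_of_nonneg_left (min_le_left _ _) P.hη.1.le)

lemma r_le : P.r k ≤ P.rk k + (2 + ‖P.G k‖) * ‖P.y k - P.x k‖ :=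
  P.isProxOf.norm_residual_le P.properFun P.convexFun _ _ _ _

lemma μ_mul_norm_sq_le :
    P.μ k * ‖P.y k - P.x k‖ ^ 2 ≤ (1 + ‖P.G k‖) * (P.r k + P.rk k) * ‖P.y k - P.x k‖ :=
  (mul_norm_sq_le_inner_GkOf _ _ _ P.ha₁ _ _ _).trans
    (P.isProxOf.inner_le P.properFun P.convexFun _ _ _ _)

end IRPNM

/-- inequalities (3.8) and (3.10). For the sequences generated by
Algorithm IRPNM, `(1-η) r(x^k) ≤ (2 + ‖G_k‖)‖d^k‖` and
`‖d^k‖ ≤ a₂⁻¹ (1+η)(1+‖G_k‖) r(x^k)^{1-ρ}` for every `k`. -/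
theorem statement9 {n m : ℕ} (P : IRPNM n m) (k : ℕ) :
    (1 - P.η) * rres P.gradψ P.A P.b P.prox (P.x k)
      ≤ (2 + ‖GkOf P.hessψ P.A P.b P.a₁
              (P.a₂ * (rres P.gradψ P.A P.b P.prox (P.x k)) ^ P.ρ) (P.x k)‖) * ‖P.d k‖ ∧
    ‖P.d k‖ ≤ P.a₂⁻¹ * (1 + P.η)
        * (1 + ‖GkOf P.hessψ P.A P.b P.a₁
              (P.a₂ * (rres P.gradψ P.A P.b P.prox (P.x k)) ^ P.ρ) (P.x k)‖)
        * (rres P.gradψ P.A P.b P.prox (P.x k)) ^ (1 - P.ρ) := by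
  change (1 - P.η) * P.r k ≤ (2 + ‖P.G k‖) * ‖P.d k‖ ∧
    ‖P.d k‖ ≤ P.a₂⁻¹ * (1 + P.η) * (1 + ‖P.G k‖) * P.r k ^ (1 - P.ρ)
  have hrk := P.rk_le k
  have hr := P.r_pos k
  rw [P.hd k]
  constructor
  · linarith [P.r_le k]
  · have hd : P.μ k * ‖P.y k - P.x k‖ ^ 2
        ≤ (1 + P.η) * (1 + ‖P.G k‖) * P.r k * ‖P.y k - P.x k‖ :=
      calc _ ≤ (1 + ‖P.G k‖) * (P.r k + P.rk k) * ‖P.y k - P.x k‖ := P.μ_mul_norm_sq_le k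
        _ ≤ (1 + ‖P.G k‖) * (P.r k + P.η * P.r k) * ‖P.y k - P.x k‖ := by gcongr
        _ = _ := by ring
    calc ‖P.y k - P.x k‖ ≤ (1 + P.η) * (1 + ‖P.G k‖) * P.r k / P.μ k :=
          le_div_of_mul_sq_le_mul (P.μ_pos k) (by have := P.hη.1; positivity)
            (norm_nonneg _) hd
      _ = P.a₂⁻¹ * (1 + P.η) * (1 + ‖P.G k‖) * P.r k ^ (1 - P.ρ) := by
        rw [IRPNM.μ, Real.rpow_sub hr, Real.rpow_one]
        field_simp
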